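/- (Higher-order Euler–Lagrange equations characterize critical points, standard case.) Let n, k ≥ 1, t₀ < t₁, let L : (Fin (k+1) → ℝ^n) → ℝ be smooth, and let q : ℝ → ℝ^n be smooth. Then the following are equivalent: (a) for every smooth h : ℝ → ℝ^n with h^{(j)}(t₀) = h^{(j)}(t₁) = 0 for all 0 ≤ j ≤ k−1, the function s ↦ ∫_{t₀}^{t₁} L(jet_k(q + s•h)(t)) dt has derivative 0 at s = 0; (b) ∑_{r=0}^{k} (−1)^r · D^r[t ↦ ∂_rL(jet_k q(t))](t) = 0 in (ℝ^n →ₗ[ℝ] ℝ) for all t ∈ [t₀, t₁], where D^r denotes the r-th iterated derivative of the (ℝ^n →ₗ[ℝ] ℝ)-valued map. -/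

import Mathlib

noncomputable section

/-- Partial Fréchet derivative in slot `r` of a map defined on `Fin m → E`,
as a continuous linear map (zero junk value for `r ≥ m`). -/
def pd {m : ℕ} {E W : Type*} [NormedAddCommGroup E] [NormedSpace ℝ E]
    [NormedAddCommGroup W] [NormedSpace ℝ W]
    (F : (Fin m → E) → W) (r : ℕ) (A : Fin m → E) : E →L[ℝ] W :=
  if h : r < m then
    (fderiv ℝ F A).comp
      (ContinuousLinearMap.pi (Pi.single (⟨r, h⟩ : Fin m) (ContinuousLinearMap.id ℝ E)))
  else 0

/-- The `k`-jet of a curve: `jet k q t = (q t, q' t, …, q^{(k)} t)`. -/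
def jet {E : Type*} [NormedAddCommGroup E] [NormedSpace ℝ E] (k : ℕ) (q : ℝ → E) (t : ℝ) :
    Fin (k + 1) → E := fun r => iteratedDeriv r q t

/-!
Differentiating under the integral sign, the derivative of the action at `s = 0` in the
direction `h` is `∫ DL(jet_k q)(jet_k h) = ∑ᵣ ∫ ∂ᵣL(jet_k q)(h⁽ʳ⁾)`. Integrating the `r`-th term
by parts `r` times moves all derivatives onto `∂ᵣL(jet_k q)`; the boundary terms only involve
`h⁽ʲ⁾(t₀), h⁽ʲ⁾(t₁)` with `j < k` and vanish. So the derivative is `∫ EL(t)(h t)`, with `EL` the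
Euler–Lagrange expression. This gives (b) ⇒ (a) at once, and (a) ⇒ (b) follows from the
fundamental lemma of the calculus of variations, tested on the variations `h = g • v` with `g` a
smooth function supported in `(t₀, t₁)`.
-/

open MeasureTheory Set Filter
open scoped ContDiff

variable {E W : Type*} [NormedAddCommGroup E] [NormedSpace ℝ E]
  [NormedAddCommGroup W] [NormedSpace ℝ W]

theorem iteratedDeriv_eq_zero_of_notMem_tsupport {f : ℝ → E} {x : ℝ} (hx : x ∉ tsupport f)
    (j : ℕ) : iteratedDeriv j f x = 0 := by
  rw [iteratedDeriv_eq_iteratedFDeriv,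
    Function.notMem_support.1 fun h => hx (support_iteratedFDeriv_subset j h)]
  rfl

theorem eqOn_zero_of_forall_intervalIntegral_smul_eq_zero [CompleteSpace W] {f : ℝ → W}
    {a b : ℝ} (hab : a < b) (hf : ContinuousOn f (Icc a b))
    (H : ∀ g : ℝ → ℝ, ContDiff ℝ ∞ g → tsupport g ⊆ Ioo a b → ∫ t in a..b, g t • f t = 0) :
    EqOn f 0 (Icc a b) := by
  have hf' : ContinuousOn f (Ioo a b) := hf.mono Ioo_subset_Icc_self
  have hae : ∀ᵐ x, x ∈ Ioo a b → f x = 0 := by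
    refine isOpen_Ioo.ae_eq_zero_of_integral_contDiff_smul_eq_zero
      (hf'.locallyIntegrableOn measurableSet_Ioo) fun g hg _ hsupp => ?_
    have hzero : ∀ x ∉ Ioc a b, g x • f x = 0 := fun x hx => by
      rw [image_eq_zero_of_notMem_tsupport fun h => hx (Ioo_subset_Ioc_self (hsupp h)), zero_smul]
    rw [← setIntegral_eq_integral_of_forall_compl_eq_zero hzero,
      ← intervalIntegral.integral_of_le hab.le]
    exact H g hg hsupp
  have hIoo : EqOn f 0 (Ioo a b) :=
    Measure.eqOn_open_of_ae_eq ((ae_restrict_iff' measurableSet_Ioo).2 hae) isOpen_Ioo hf'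
      continuousOn_const
  exact hIoo.of_subset_closure hf continuousOn_const Ioo_subset_Icc_self
    (closure_Ioo hab.ne).symm.subset

theorem intervalIntegral_apply_deriv_eq_neg_deriv_apply [CompleteSpace W] {f : ℝ → E →L[ℝ] W}
    {g : ℝ → E} {a b : ℝ} (hf : ContDiff ℝ 1 f) (hg : ContDiff ℝ 1 g) (ha : g a = 0)
    (hb : g b = 0) :
    ∫ t in a..b, f t (deriv g t) = -∫ t in a..b, deriv f t (g t) := by
  have hint₁ : IntervalIntegrable (fun t => deriv f t (g t)) volume a b :=
    ((hf.continuous_deriv le_rfl).clm_apply hg.continuous).intervalIntegrable _ _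
  have hint₂ : IntervalIntegrable (fun t => f t (deriv g t)) volume a b :=
    (hf.continuous.clm_apply (hg.continuous_deriv le_rfl)).intervalIntegrable _ _
  have hprod := intervalIntegral.integral_eq_sub_of_hasDerivAt
    (fun t _ => ((hf.differentiable one_ne_zero t).hasDerivAt.clm_apply
      (hg.differentiable one_ne_zero t).hasDerivAt)) (hint₁.add hint₂)
  rw [intervalIntegral.integral_add hint₁ hint₂, ha, hb, map_zero, map_zero, sub_zero] at hprod
  rw [eq_neg_iff_add_eq_zero, add_comm, hprod]

theorem intervalIntegral_apply_iteratedDeriv_eq_iteratedDeriv_apply [CompleteSpace W]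
    {f : ℝ → E →L[ℝ] W} {g : ℝ → E} {a b : ℝ} {r : ℕ} (hf : ContDiff ℝ r f) (hg : ContDiff ℝ r g)
    (hbc : ∀ j < r, iteratedDeriv j g a = 0 ∧ iteratedDeriv j g b = 0) :
    ∫ t in a..b, f t (iteratedDeriv r g t) =
      (-1 : ℝ) ^ r • ∫ t in a..b, iteratedDeriv r f t (g t) := by
  induction r generalizing g with
  | zero => simp
  | succ r ih =>
    have hg' : ContDiff ℝ r (deriv g) := hg.deriv'
    have hbc' : ∀ j < r, iteratedDeriv j (deriv g) a = 0 ∧ iteratedDeriv j (deriv g) b = 0 :=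
      fun j hj => by simpa only [← iteratedDeriv_succ'] using hbc (j + 1) (by omega)
    have hf' : ContDiff ℝ r f := hf.of_le (by simp)
    have hfr : ContDiff ℝ 1 (iteratedDeriv r f) :=
      (contDiff_nat_succ_iff_contDiff_one_iteratedDeriv.1 hf).2
    rw [iteratedDeriv_succ', ih hf' hg' hbc', intervalIntegral_apply_deriv_eq_neg_deriv_apply hfr
      (hg.of_le (by simp)) (hbc 0 r.succ_pos).1 (hbc 0 r.succ_pos).2, ← iteratedDeriv_succ,
      pow_succ, mul_neg_one, neg_smul, smul_neg]

variable {V : Type*} [NormedAddCommGroup V] [NormedSpace ℝ V]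

theorem hasDerivAt_intervalIntegral_of_continuous_uncurry_deriv {F F' : ℝ → ℝ → W}
    {a b s₀ : ℝ} (hF : ∀ s, Continuous (F s)) (hF' : Continuous (Function.uncurry F'))
    (hderiv : ∀ s t, HasDerivAt (F · t) (F' s t) s) :
    HasDerivAt (fun s => ∫ t in a..b, F s t) (∫ t in a..b, F' s₀ t) s₀ := by
  obtain ⟨C, hC⟩ := ((isCompact_closedBall s₀ 1).prod isCompact_uIcc).exists_bound_of_continuousOn
    (hF'.continuousOn (s := Metric.closedBall s₀ 1 ×ˢ uIcc a b))
  have hF's₀ : Continuous (F' s₀) := hF'.comp (continuous_const.prodMk continuous_id)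
  exact (intervalIntegral.hasDerivAt_integral_of_dominated_loc_of_deriv_le (bound := fun _ => C)
    (Metric.ball_mem_nhds s₀ one_pos) (Eventually.of_forall fun s => (hF s).aestronglyMeasurable)
    ((hF s₀).intervalIntegrable _ _) hF's₀.aestronglyMeasurable
    (ae_of_all _ fun t ht s hs => hC (s, t) ⟨Metric.ball_subset_closedBall hs, uIoc_subset_uIcc ht⟩)
    intervalIntegrable_const (ae_of_all _ fun t _ s _ => hderiv s t)).2

theorem hasDerivAt_intervalIntegral_comp_add_smul {L : V → W} (hL : ContDiff ℝ 1 L)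
    {u v : ℝ → V} (hu : Continuous u) (hv : Continuous v) (a b : ℝ) :
    HasDerivAt (fun s : ℝ => ∫ t in a..b, L (u t + s • v t))
      (∫ t in a..b, fderiv ℝ L (u t) (v t)) 0 := by
  have hline : ∀ s t, HasDerivAt (fun s : ℝ => u t + s • v t) (v t) s := fun s t => by
    simpa using ((hasDerivAt_id s).smul_const (v t)).const_add (u t)
  simpa using hasDerivAt_intervalIntegral_of_continuous_uncurry_deriv (s₀ := 0)
    (F' := fun s t => fderiv ℝ L (u t + s • v t) (v t))
    (fun s => hL.continuous.comp (hu.add (hv.const_smul s)))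
    (((hL.continuous_fderiv one_ne_zero).comp ((hu.comp continuous_snd).add
      (continuous_fst.smul (hv.comp continuous_snd)))).clm_apply (hv.comp continuous_snd))
    fun s t => (hL.differentiable one_ne_zero _).hasFDerivAt.comp_hasDerivAt s (hline s t)

theorem pd_apply {m : ℕ} (F : (Fin m → E) → W) (i : Fin m) (A : Fin m → E) (e : E) :
    pd F i A e = fderiv ℝ F A (Pi.single i e) := by
  simp only [pd, i.isLt, dif_pos, ContinuousLinearMap.comp_apply]
  congr 1
  ext j
  rcases eq_or_ne j i with rfl | hj <;> simp [*]

theorem sum_pd_apply {m : ℕ} (F : (Fin m → E) → W) (A v : Fin m → E) :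
    ∑ i : Fin m, pd F i A (v i) = fderiv ℝ F A v := by
  simp only [pd_apply, ← map_sum, Finset.univ_sum_single]

theorem contDiff_pd {m : ℕ} {n : WithTop ℕ∞} {l : ℕ∞} {F : (Fin m → E) → W}
    (hF : ContDiff ℝ n F) (hln : l + 1 ≤ n) (r : ℕ) : ContDiff ℝ l (pd F r) := by
  unfold pd
  split
  · exact (hF.fderiv_right hln).clm_comp contDiff_const
  · exact contDiff_const

theorem jet_add_smul {k : ℕ} {q h : ℝ → E} (hq : ContDiff ℝ k q) (hh : ContDiff ℝ k h)
    (s t : ℝ) : jet k (q + s • h) t = jet k q t + s • jet k h t := by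
  ext r
  have hr : (r : WithTop ℕ∞) ≤ k := by exact_mod_cast r.is_le
  simp only [jet, Pi.add_apply, Pi.smul_apply]
  have hsh : ContDiffAt ℝ r (s • h) t := ((hh.of_le hr).const_smul s).contDiffAt
  rw [iteratedDeriv_add (hq.of_le hr).contDiffAt hsh, iteratedDeriv_const_smul_field]

theorem contDiff_jet {k : ℕ} {q : ℝ → E} (hq : ContDiff ℝ ∞ q) : ContDiff ℝ ∞ (jet k q) :=
  contDiff_pi.2 fun r => by simpa only [jet, iteratedDeriv_eq_iterate] using hq.iterate_deriv r

section EulerLagrange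

variable {k : ℕ} {L : (Fin (k + 1) → E) → W} {q : ℝ → E}

def eulerLagrange (k : ℕ) (L : (Fin (k + 1) → E) → W) (q : ℝ → E) (t : ℝ) : E →L[ℝ] W :=
  ∑ r ∈ Finset.range (k + 1), (-1 : ℝ) ^ r • iteratedDeriv r (fun u => pd L r (jet k q u)) t

theorem contDiff_pd_comp_jet (hL : ContDiff ℝ ∞ L) (hq : ContDiff ℝ ∞ q) (r : ℕ) :
    ContDiff ℝ ∞ fun u => pd L r (jet k q u) :=
  (contDiff_pd hL (by simp) r).comp (contDiff_jet hq)

theorem continuous_eulerLagrange (hL : ContDiff ℝ ∞ L) (hq : ContDiff ℝ ∞ q) :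
    Continuous (eulerLagrange k L q) :=
  continuous_finsetSum _ fun r _ => Continuous.const_smul
    ((contDiff_pd_comp_jet hL hq r).continuous_iteratedDeriv r (by exact_mod_cast le_top))
    ((-1 : ℝ) ^ r)

theorem intervalIntegral_fderiv_jet_eq_eulerLagrange [CompleteSpace W] (hL : ContDiff ℝ ∞ L)
    (hq : ContDiff ℝ ∞ q) {h : ℝ → E} (hh : ContDiff ℝ ∞ h) {a b : ℝ}
    (hbc : ∀ j < k, iteratedDeriv j h a = 0 ∧ iteratedDeriv j h b = 0) :
    ∫ t in a..b, fderiv ℝ L (jet k q t) (jet k h t) =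
      ∫ t in a..b, eulerLagrange k L q t (h t) := by
  have hsum : ∀ t, fderiv ℝ L (jet k q t) (jet k h t) =
      ∑ r ∈ Finset.range (k + 1), pd L r (jet k q t) (iteratedDeriv r h t) := fun t => by
    rw [← sum_pd_apply,
      ← Fin.sum_univ_eq_sum_range fun r => pd L r (jet k q t) (iteratedDeriv r h t)]
    rfl
  have hr : ∀ r : ℕ, (r : WithTop ℕ∞) ≤ ∞ := fun r => by exact_mod_cast le_top
  calc ∫ t in a..b, fderiv ℝ L (jet k q t) (jet k h t)
      = ∑ r ∈ Finset.range (k + 1), ∫ t in a..b, pd L r (jet k q t) (iteratedDeriv r h t) := by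
        simp_rw [hsum]
        exact intervalIntegral.integral_finsetSum fun r _ =>
          ((contDiff_pd_comp_jet hL hq r).continuous.clm_apply
            (hh.continuous_iteratedDeriv r (hr r))).intervalIntegrable _ _
    _ = ∑ r ∈ Finset.range (k + 1), (-1 : ℝ) ^ r •
          ∫ t in a..b, iteratedDeriv r (fun u => pd L r (jet k q u)) t (h t) := by
        refine Finset.sum_congr rfl fun r hr' =>
          intervalIntegral_apply_iteratedDeriv_eq_iteratedDeriv_apply
            ((contDiff_pd_comp_jet hL hq r).of_le (hr r)) (hh.of_le (hr r)) fun j hj => hbc j ?_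
        have := Finset.mem_range.1 hr'
        omega
    _ = ∫ t in a..b, eulerLagrange k L q t (h t) := by
        simp only [eulerLagrange, FunLike.coe_sum, FunLike.coe_smul, Finset.sum_apply,
          Pi.smul_apply]
        rw [intervalIntegral.integral_finsetSum fun r _ => ?_]
        · simp only [intervalIntegral.integral_smul]
        · exact (((contDiff_pd_comp_jet hL hq r).continuous_iteratedDeriv r (hr r)).clm_apply
            hh.continuous).const_smul _ |>.intervalIntegrable _ _

theorem hasDerivAt_intervalIntegral_jet_add_smul [CompleteSpace W] (hL : ContDiff ℝ ∞ L)
    (hq : ContDiff ℝ ∞ q) {h : ℝ → E} (hh : ContDiff ℝ ∞ h) {a b : ℝ}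
    (hbc : ∀ j < k, iteratedDeriv j h a = 0 ∧ iteratedDeriv j h b = 0) :
    HasDerivAt (fun s : ℝ => ∫ t in a..b, L (jet k (q + s • h) t))
      (∫ t in a..b, eulerLagrange k L q t (h t)) 0 := by
  rw [← intervalIntegral_fderiv_jet_eq_eulerLagrange hL hq hh hbc]
  have hk : (k : WithTop ℕ∞) ≤ ∞ := by exact_mod_cast le_top
  simpa only [jet_add_smul (hq.of_le hk) (hh.of_le hk)] using
    hasDerivAt_intervalIntegral_comp_add_smul (hL.of_le (by simp)) (contDiff_jet hq).continuous
      (contDiff_jet hh).continuous a b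

end EulerLagrange

theorem higher_order_euler_lagrange_iff_critical_general (n k : ℕ)
    (t₀ t₁ : ℝ) (ht : t₀ < t₁)
    (L : (Fin (k + 1) → EuclideanSpace ℝ (Fin n)) → ℝ) (hL : ContDiff ℝ (⊤ : ℕ∞) L)
    (q : ℝ → EuclideanSpace ℝ (Fin n)) (hq : ContDiff ℝ (⊤ : ℕ∞) q) :
    (∀ h : ℝ → EuclideanSpace ℝ (Fin n), ContDiff ℝ (⊤ : ℕ∞) h →
        (∀ j < k, iteratedDeriv j h t₀ = 0 ∧ iteratedDeriv j h t₁ = 0) →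
        HasDerivAt (fun s : ℝ => ∫ t in t₀..t₁, L (jet k (q + s • h) t)) 0 0) ↔
      ∀ t ∈ Set.Icc t₀ t₁,
        (∑ r ∈ Finset.range (k + 1),
          (-1 : ℝ) ^ r • iteratedDeriv r (fun u => pd L r (jet k q u)) t) = 0 := by
  change _ ↔ EqOn (eulerLagrange k L q) 0 (Icc t₀ t₁)
  constructor
  · intro hcrit
    refine eqOn_zero_of_forall_intervalIntegral_smul_eq_zero ht
      (continuous_eulerLagrange hL hq).continuousOn fun g hg hsupp => ?_
    ext v
    have hgv : ContDiff ℝ ∞ fun t => g t • v := hg.smul contDiff_const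
    have hvanish : ∀ x ∉ Ioo t₀ t₁, ∀ j, iteratedDeriv j (fun t => g t • v) x = 0 := fun x hx =>
      iteratedDeriv_eq_zero_of_notMem_tsupport fun hx' =>
        hx (hsupp (tsupport_smul_subset_left _ _ hx'))
    have hbc : ∀ j < k, iteratedDeriv j (fun t => g t • v) t₀ = 0 ∧
        iteratedDeriv j (fun t => g t • v) t₁ = 0 := fun j _ =>
      ⟨hvanish t₀ (by simp) j, hvanish t₁ (by simp) j⟩
    have hint : Continuous fun t => g t • eulerLagrange k L q t :=
      hg.continuous.smul (continuous_eulerLagrange hL hq)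
    rw [ContinuousLinearMap.intervalIntegral_apply (hint.intervalIntegrable _ _)]
    simpa using (hasDerivAt_intervalIntegral_jet_add_smul hL hq hgv hbc).unique (hcrit _ hgv hbc)
  · intro hEL h hh hbc
    have hzero : ∫ t in t₀..t₁, eulerLagrange k L q t (h t) = 0 := by
      rw [← intervalIntegral.integral_zero]
      exact intervalIntegral.integral_congr fun t ht' => by
        simp [hEL (uIcc_of_le ht.le ▸ ht')]
    simpa [hzero] using hasDerivAt_intervalIntegral_jet_add_smul hL hq hh hbc

/-- **Higher-order Euler–Lagrange equations characterize critical points (standard case).**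
A smooth curve `q` is a critical point of the action of a smooth `k`-th order Lagrangian `L`
(with respect to all smooth variations whose derivatives of orders `0,…,k-1` vanish at the
endpoints) if and only if `∑_{r=0}^{k} (−1)^r D^r[t ↦ ∂_r L(jet_k q t)](t) = 0` on `[t₀, t₁]`. -/
theorem higher_order_euler_lagrange_iff_critical (n k : ℕ) (hn : 1 ≤ n) (hk : 1 ≤ k)
    (t₀ t₁ : ℝ) (ht : t₀ < t₁)
    (L : (Fin (k + 1) → EuclideanSpace ℝ (Fin n)) → ℝ) (hL : ContDiff ℝ (⊤ : ℕ∞) L)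
    (q : ℝ → EuclideanSpace ℝ (Fin n)) (hq : ContDiff ℝ (⊤ : ℕ∞) q) :
    (∀ h : ℝ → EuclideanSpace ℝ (Fin n), ContDiff ℝ (⊤ : ℕ∞) h →
        (∀ j < k, iteratedDeriv j h t₀ = 0 ∧ iteratedDeriv j h t₁ = 0) →
        HasDerivAt (fun s : ℝ => ∫ t in t₀..t₁, L (jet k (q + s • h) t)) 0 0) ↔
      ∀ t ∈ Set.Icc t₀ t₁,
        (∑ r ∈ Finset.range (k + 1),
          (-1 : ℝ) ^ r • iteratedDeriv r (fun u => pd L r (jet k q u)) t) = 0 :=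
  higher_order_euler_lagrange_iff_critical_general n k t₀ t₁ ht L hL q hq
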